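/- arXiv:math/0301247 — 5 statements merged into one kernel-verified Lean document; each statement's English description precedes it below -/
import Mathlib

section
/- For every n ≥ 2, the subgroup D_{n-1} = ⟨ε_{n,1}, ε_{n,2}, …, ε_{n,n-1}, ε_{1,n}, ε_{2,n}, …, ε_{n-1,n}⟩ is a normal subgroup of the group Cb_n of basis-conjugating automorphisms of the free group F_n. -/
/-!
Since `Cb n` is generated by the `ε_{ij}`, it suffices to show that each `ε_{ij}` normalizes
`D = D_{n-1}`. If `i = n` or `j = n` then `ε_{ij} ∈ D`. Otherwise conjugation by `ε_{ij}`
fixes or, by McCool's relations, rewrites each generator `ε_{nt}`, `ε_{tn}` of `D` as a word in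
generators of `D`, so `ε_{ij} D ε_{ij}⁻¹ ≤ D`. The reverse inclusion comes for free: the
automorphism `x_l ↦ x_l⁻¹` of `F_n` conjugates every `ε_{ij}` to its inverse, hence maps `D`
onto itself and turns conjugation by `ε_{ij}` into conjugation by `ε_{ij}⁻¹`.
-/

/-- The basis-conjugating automorphism ε_{ij} of the free group:
`x_i ↦ x_j⁻¹ x_i x_j`, `x_l ↦ x_l` for `l ≠ i`. -/
def eps {n : ℕ} (i j : Fin n) : MulAut (FreeGroup (Fin n)) :=
  MonoidHom.toMulEquiv
    (FreeGroup.lift fun l =>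
      if l = i then (FreeGroup.of j)⁻¹ * FreeGroup.of i * FreeGroup.of j else FreeGroup.of l)
    (FreeGroup.lift fun l =>
      if l = i then FreeGroup.of j * FreeGroup.of i * (FreeGroup.of j)⁻¹ else FreeGroup.of l)
    (by ext l; by_cases h : l = i <;> by_cases h2 : j = i <;> simp [h, h2, mul_assoc])
    (by ext l; by_cases h : l = i <;> by_cases h2 : j = i <;> simp [h, h2, mul_assoc])

/-- The group `Cb n` of basis-conjugating automorphisms: the subgroup of `Aut(F_n)`
generated by all `ε_{ij}`, `i ≠ j`. -/
def Cb (n : ℕ) : Subgroup (MulAut (FreeGroup (Fin n))) :=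
  Subgroup.closure {e | ∃ i j : Fin n, i ≠ j ∧ e = eps i j}

/-- The subgroup `D_j` (0-based index: the paper's `D_i` is `Dsub i`), generated by
`ε_{j,t}` and `ε_{t,j}` for all `t < j`. -/
def Dsub {n : ℕ} (j : Fin n) : Subgroup (MulAut (FreeGroup (Fin n))) :=
  Subgroup.closure {e | ∃ t : Fin n, t < j ∧ (e = eps j t ∨ e = eps t j)}

open FreeGroup

@[simp] lemma eps_apply_of {n : ℕ} (i j l : Fin n) :
    eps i j (of l) = if l = i then (of j)⁻¹ * of i * of j else of l := by
  simp [eps, MonoidHom.toMulEquiv]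

@[simp] lemma eps_symm_apply_of {n : ℕ} (i j l : Fin n) :
    (eps i j).symm (of l) = if l = i then of j * of i * (of j)⁻¹ else of l := by
  simp [eps, MonoidHom.toMulEquiv, MulEquiv.symm]

@[ext] lemma FreeGroup.mulAut_ext {α : Type*} {f g : MulAut (FreeGroup α)}
    (h : ∀ a, f (of a) = g (of a)) : f = g :=
  MulEquiv.toMonoidHom_injective (FreeGroup.ext_hom _ _ h)

def FreeGroup.invertBasis (α : Type*) : MulAut (FreeGroup α) :=
  MonoidHom.toMulEquiv (lift fun a => (of a)⁻¹) (lift fun a => (of a)⁻¹)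
    (by ext; simp) (by ext; simp)

@[simp] lemma FreeGroup.invertBasis_apply_of {α : Type*} (a : α) :
    invertBasis α (of a) = (of a)⁻¹ := by
  simp [invertBasis, MonoidHom.toMulEquiv]

@[simp] lemma FreeGroup.invertBasis_symm_apply_of {α : Type*} (a : α) :
    (invertBasis α).symm (of a) = (of a)⁻¹ := by
  simp [invertBasis, MonoidHom.toMulEquiv, MulEquiv.symm]

lemma FreeGroup.invertBasis_inv (α : Type*) : (invertBasis α)⁻¹ = invertBasis α := by
  ext; simp

lemma invertBasis_conj_eps {n : ℕ} (i j : Fin n) :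
    invertBasis (Fin n) * eps i j * (invertBasis (Fin n))⁻¹ = (eps i j)⁻¹ := by
  ext l
  by_cases hl : l = i <;> simp [MulAut.mul_apply, hl, mul_assoc]

section McCool

variable {n : ℕ} {i j k l : Fin n}

lemma eps_commute (hik : i ≠ k) (hil : i ≠ l) (hkj : k ≠ j) :
    Commute (eps i j) (eps k l) := by
  ext a
  by_cases ha : a = i <;> by_cases ha' : a = k <;>
    simp_all [MulAut.mul_apply, mul_assoc, eq_comm]

lemma eps_conj_eps_to_fst (hij : i ≠ j) (hik : i ≠ k) (hjk : j ≠ k) :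
    eps i j * eps k i * (eps i j)⁻¹ = (eps k j)⁻¹ * eps k i * eps k j := by
  ext a
  by_cases ha : a = i <;> by_cases ha' : a = j <;> by_cases ha'' : a = k <;>
    simp_all [MulAut.mul_apply, mul_assoc, eq_comm]

lemma eps_conj_eps_from_fst (hij : i ≠ j) (hik : i ≠ k) (hjk : j ≠ k) :
    eps i j * eps i k * (eps i j)⁻¹ = (eps k j)⁻¹ * eps i k * eps k j := by
  ext a
  by_cases ha : a = i <;> by_cases ha' : a = j <;> by_cases ha'' : a = k <;>
    simp_all [MulAut.mul_apply, mul_assoc, eq_comm]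

lemma eps_conj_eps_from_snd (hij : i ≠ j) (hik : i ≠ k) (hjk : j ≠ k) :
    eps i j * eps j k * (eps i j)⁻¹ =
      (eps k j)⁻¹ * (eps i k)⁻¹ * eps k j * eps i k * eps j k := by
  ext a
  by_cases ha : a = i <;> by_cases ha' : a = j <;> by_cases ha'' : a = k <;>
    simp_all [MulAut.mul_apply, mul_assoc, eq_comm]

end McCool

namespace Subgroup

variable {G : Type*} [Group G]

lemma conj_mem_closure {S : Set G} {g : G} (h : ∀ s ∈ S, g * s * g⁻¹ ∈ closure S) {x : G}
    (hx : x ∈ closure S) : g * x * g⁻¹ ∈ closure S :=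
  (closure_le ((closure S).comap (MulAut.conj g).toMonoidHom)).2 h hx

lemma mem_normalizer_of_conj_eq_inv {H : Subgroup G} {g ι : G} (hι : ι ∈ normalizer H)
    (hιg : ι * g * ι⁻¹ = g⁻¹) (hg : ∀ x ∈ H, g * x * g⁻¹ ∈ H) :
    g ∈ normalizer H := by
  refine mem_normalizer_iff.2 fun x => ⟨hg x, fun hx => ?_⟩
  have hx' : x = ι * (g * (ι⁻¹ * (g * x * g⁻¹) * ι) * g⁻¹) * ι⁻¹ :=
    calc x = g⁻¹ * (g * x * g⁻¹) * g := by group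
      _ = (ι * g * ι⁻¹) * (g * x * g⁻¹) * (ι * g * ι⁻¹)⁻¹ := by rw [hιg, inv_inv]
      _ = _ := by group
  rw [hx']
  exact (mem_normalizer_iff.1 hι _).1 (hg _ ((mem_normalizer_iff''.1 hι _).1 hx))

end Subgroup

section Dsub

variable {n : ℕ} {m t : Fin n}

lemma eps_mem_Dsub_left (ht : t < m) : eps m t ∈ Dsub m :=
  Subgroup.subset_closure ⟨t, ht, Or.inl rfl⟩

lemma eps_mem_Dsub_right (ht : t < m) : eps t m ∈ Dsub m :=
  Subgroup.subset_closure ⟨t, ht, Or.inr rfl⟩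

lemma Dsub_le_Cb (m : Fin n) : Dsub m ≤ Cb n := by
  refine (Subgroup.closure_le _).2 ?_
  rintro _ ⟨t, ht, rfl | rfl⟩
  · exact Subgroup.subset_closure ⟨m, t, ht.ne', rfl⟩
  · exact Subgroup.subset_closure ⟨t, m, ht.ne, rfl⟩

lemma invertBasis_mem_normalizer_Dsub (m : Fin n) :
    invertBasis (Fin n) ∈ Subgroup.normalizer (Dsub m) := by
  have hconj :
      ∀ x ∈ Dsub m, invertBasis (Fin n) * x * (invertBasis (Fin n))⁻¹ ∈ Dsub m := by
    refine fun x => Subgroup.conj_mem_closure ?_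
    rintro _ ⟨t, ht, rfl | rfl⟩ <;> rw [invertBasis_conj_eps] <;> refine inv_mem ?_
    exacts [eps_mem_Dsub_left ht, eps_mem_Dsub_right ht]
  refine Subgroup.mem_normalizer_iff.2 fun x => ⟨hconj x, fun hx => ?_⟩
  set ι := invertBasis (Fin n)
  have hx' : x = ι * (ι * x * ι⁻¹) * ι⁻¹ :=
    calc x = ι⁻¹ * (ι * x * ι⁻¹) * ι := by group
      _ = ι * (ι * x * ι⁻¹) * ι⁻¹ := by rw [invertBasis_inv]
  rw [hx']
  exact hconj _ hx

lemma eps_conj_mem_Dsub {i j : Fin n} (hi : i ≤ m) (hj : j ≤ m) (hij : i ≠ j)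
    {x : MulAut (FreeGroup (Fin n))} (hx : x ∈ Dsub m) :
    eps i j * x * (eps i j)⁻¹ ∈ Dsub m := by
  rcases hi.eq_or_lt with rfl | hi
  · have hD := eps_mem_Dsub_left (hj.lt_of_ne hij.symm)
    exact mul_mem (mul_mem hD hx) (inv_mem hD)
  rcases hj.eq_or_lt with rfl | hj
  · have hD := eps_mem_Dsub_right hi
    exact mul_mem (mul_mem hD hx) (inv_mem hD)
  have hmi := eps_mem_Dsub_left hi
  have hmj := eps_mem_Dsub_left hj
  have him := eps_mem_Dsub_right hi
  have hjm := eps_mem_Dsub_right hj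
  refine Subgroup.conj_mem_closure ?_ hx
  rintro _ ⟨t, ht, rfl | rfl⟩
  · by_cases hti : t = i
    · subst hti
      rw [eps_conj_eps_to_fst hij hi.ne hj.ne]
      exact mul_mem (mul_mem (inv_mem hmj) hmi) hmj
    · rw [(eps_commute hi.ne (Ne.symm hti) hj.ne.symm).mul_inv_cancel]
      exact eps_mem_Dsub_left ht
  · by_cases hti : t = i
    · subst hti
      rw [eps_conj_eps_from_fst hij hi.ne hj.ne]
      exact mul_mem (mul_mem (inv_mem hmj) him) hmj
    by_cases htj : t = j
    · subst htj
      rw [eps_conj_eps_from_snd hij hi.ne hj.ne]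
      exact mul_mem (mul_mem (mul_mem (mul_mem (inv_mem hmj) (inv_mem him)) hmj) him) hjm
    · rw [(eps_commute (Ne.symm hti) hi.ne htj).mul_inv_cancel]
      exact eps_mem_Dsub_right ht

end Dsub

/-- For every `n ≥ 2` (here `n + 2`), the subgroup `D_{n-1}` generated by
`ε_{n,1}, …, ε_{n,n-1}, ε_{1,n}, …, ε_{n-1,n}` is a normal subgroup of `Cb_n`. -/
theorem D_last_normal_in_Cb (n : ℕ) :
    Dsub (Fin.last (n + 1)) ≤ Cb (n + 2) ∧
      ((Dsub (Fin.last (n + 1))).subgroupOf (Cb (n + 2))).Normal := by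
  refine ⟨Dsub_le_Cb _, (Subgroup.normal_subgroupOf_iff_le_normalizer (Dsub_le_Cb _)).2 ?_⟩
  refine (Subgroup.closure_le _).2 ?_
  rintro _ ⟨i, j, hij, rfl⟩
  exact Subgroup.mem_normalizer_of_conj_eq_inv (invertBasis_mem_normalizer_Dsub _)
    (invertBasis_conj_eps i j) fun x => eps_conj_mem_Dsub (Fin.le_last i) (Fin.le_last j) hij
end

section
/- Let k and l be integers with 2 ≤ k < l ≤ n. Then the subgroup D_{k-1} of Cb_n lies in the normalizer of the subgroup D_{l-1}; that is, for every generator ε of D_{k-1} and every d ∈ D_{l-1}, the conjugate ε^{-1} d ε lies in D_{l-1}. -/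
lemma eps_of {n : ℕ} (i j l : Fin n) :
    eps i j (FreeGroup.of l) = if l = i then (FreeGroup.of j)⁻¹ * FreeGroup.of i * FreeGroup.of j else FreeGroup.of l := by
  simp [eps, MonoidHom.toMulEquiv, MulAut.inv_def]

lemma eps_inv_of {n : ℕ} (i j l : Fin n) :
    (eps i j)⁻¹ (FreeGroup.of l) = if l = i then FreeGroup.of j * FreeGroup.of i * (FreeGroup.of j)⁻¹ else FreeGroup.of l := by
  simp [eps, MonoidHom.toMulEquiv, MulAut.inv_def]

lemma eps_symm_of {n : ℕ} (i j l : Fin n) :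
    (eps i j).symm (FreeGroup.of l) = if l = i then FreeGroup.of j * FreeGroup.of i * (FreeGroup.of j)⁻¹ else FreeGroup.of l :=
  eps_inv_of i j l

lemma aut_ext {n : ℕ} {f g : MulAut (FreeGroup (Fin n))}
    (h : ∀ l, f (FreeGroup.of l) = g (FreeGroup.of l)) : f = g := by
  apply MulEquiv.toMonoidHom_injective; ext l; exact h l

lemma eps_comm {n : ℕ} {i j k l : Fin n} (hik : i ≠ k) (hil : i ≠ l) (hkj : k ≠ j) :
    eps i j * eps k l = eps k l * eps i j := by
  apply aut_ext; intro x
  by_cases h1 : x = i <;> by_cases h2 : x = k <;>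
    simp_all [MulAut.mul_apply, eps_of, mul_assoc, Ne.symm hik, Ne.symm hil, Ne.symm hkj]

section
variable {n : ℕ} {a b m : Fin n} (hab : a ≠ b) (ham : a ≠ m) (hbm : b ≠ m)
include hab ham hbm

lemma epsL1 : (eps a b)⁻¹ * eps a m * eps a b = eps m b * eps a m * (eps m b)⁻¹ := by
  apply aut_ext; intro x
  by_cases h1 : x = a <;> by_cases h2 : x = b <;> by_cases h3 : x = m <;>
    simp_all [MulAut.mul_apply, eps_of, eps_inv_of, eps_symm_of, mul_assoc, Ne.symm hab, Ne.symm ham, Ne.symm hbm]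
lemma epsL2 : eps a b * eps a m * (eps a b)⁻¹ = (eps m b)⁻¹ * eps a m * eps m b := by
  apply aut_ext; intro x
  by_cases h1 : x = a <;> by_cases h2 : x = b <;> by_cases h3 : x = m <;>
    simp_all [MulAut.mul_apply, eps_of, eps_inv_of, eps_symm_of, mul_assoc, Ne.symm hab, Ne.symm ham, Ne.symm hbm]
lemma epsL3 : (eps a b)⁻¹ * eps m a * eps a b = eps m b * eps m a * (eps m b)⁻¹ := by
  apply aut_ext; intro x
  by_cases h1 : x = a <;> by_cases h2 : x = b <;> by_cases h3 : x = m <;>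
    simp_all [MulAut.mul_apply, eps_of, eps_inv_of, eps_symm_of, mul_assoc, Ne.symm hab, Ne.symm ham, Ne.symm hbm]
lemma epsL4 : eps a b * eps m a * (eps a b)⁻¹ = (eps m b)⁻¹ * eps m a * eps m b := by
  apply aut_ext; intro x
  by_cases h1 : x = a <;> by_cases h2 : x = b <;> by_cases h3 : x = m <;>
    simp_all [MulAut.mul_apply, eps_of, eps_inv_of, eps_symm_of, mul_assoc, Ne.symm hab, Ne.symm ham, Ne.symm hbm]
lemma epsL5 : (eps a b)⁻¹ * eps b m * eps a b = eps m b * (eps a m)⁻¹ * (eps m b)⁻¹ * eps a m * eps b m := by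
  apply aut_ext; intro x
  by_cases h1 : x = a <;> by_cases h2 : x = b <;> by_cases h3 : x = m <;>
    simp_all [MulAut.mul_apply, eps_of, eps_inv_of, eps_symm_of, mul_assoc, Ne.symm hab, Ne.symm ham, Ne.symm hbm]
lemma epsL6 : eps a b * eps b m * (eps a b)⁻¹ = (eps m b)⁻¹ * (eps a m)⁻¹ * eps m b * eps a m * eps b m := by
  apply aut_ext; intro x
  by_cases h1 : x = a <;> by_cases h2 : x = b <;> by_cases h3 : x = m <;>
    simp_all [MulAut.mul_apply, eps_of, eps_inv_of, eps_symm_of, mul_assoc, Ne.symm hab, Ne.symm ham, Ne.symm hbm]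
end

lemma conj_mem_closure {G : Type*} [Group G] {S : Set G} {e : G}
    (h : ∀ s ∈ S, e * s * e⁻¹ ∈ Subgroup.closure S) :
    ∀ g ∈ Subgroup.closure S, e * g * e⁻¹ ∈ Subgroup.closure S := by
  intro g hg
  induction hg using Subgroup.closure_induction with
  | mem s hs => exact h s hs
  | one => simpa using Subgroup.one_mem _
  | mul x y hx hy ihx ihy =>
      have : e * (x * y) * e⁻¹ = (e * x * e⁻¹) * (e * y * e⁻¹) := by group
      rw [this]; exact mul_mem ihx ihy
  | inv x hx ih =>
      have : e * x⁻¹ * e⁻¹ = (e * x * e⁻¹)⁻¹ := by group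
      rw [this]; exact inv_mem ih

lemma eps_mem_in_Dsub {n : ℕ} {m t : Fin n} (ht : t < m) :
    eps m t ∈ Dsub m ∧ eps t m ∈ Dsub m :=
  ⟨Subgroup.subset_closure ⟨t, ht, Or.inl rfl⟩, Subgroup.subset_closure ⟨t, ht, Or.inr rfl⟩⟩

lemma eps_conj_gen {n : ℕ} {m a b : Fin n} (ha : a < m) (hb : b < m) (hab : a ≠ b) :
    ∀ s ∈ {e | ∃ t : Fin n, t < m ∧ (e = eps m t ∨ e = eps t m)},
      eps a b * s * (eps a b)⁻¹ ∈ Dsub m ∧ (eps a b)⁻¹ * s * eps a b ∈ Dsub m := by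
  have ham : a ≠ m := ne_of_lt ha
  have hbm : b ≠ m := ne_of_lt hb
  rintro s ⟨c, hc, rfl | rfl⟩
  · -- s = eps m c
    by_cases hca : c = a
    · subst hca
      constructor
      · rw [show eps c b * eps m c * (eps c b)⁻¹ = (eps m b)⁻¹ * eps m c * eps m b from
          epsL4 hab ham hbm]
        exact mul_mem (mul_mem (inv_mem (eps_mem_in_Dsub hb).1) (eps_mem_in_Dsub hc).1)
          (eps_mem_in_Dsub hb).1
      · rw [show (eps c b)⁻¹ * eps m c * eps c b = eps m b * eps m c * (eps m b)⁻¹ from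
          epsL3 hab ham hbm]
        exact mul_mem (mul_mem (eps_mem_in_Dsub hb).1 (eps_mem_in_Dsub hc).1)
          (inv_mem (eps_mem_in_Dsub hb).1)
    · have hcomm : eps m c * eps a b = eps a b * eps m c :=
        eps_comm (Ne.symm ham) (Ne.symm hbm) (fun h => hca h.symm)
      constructor
      · have : eps a b * eps m c * (eps a b)⁻¹ = eps m c := by
          rw [← hcomm]; group
        rw [this]; exact (eps_mem_in_Dsub hc).1
      · have : (eps a b)⁻¹ * eps m c * eps a b = eps m c := by
          rw [mul_assoc, hcomm]; group
        rw [this]; exact (eps_mem_in_Dsub hc).1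
  · -- s = eps c m
    by_cases hca : c = a
    · subst hca
      constructor
      · rw [show eps c b * eps c m * (eps c b)⁻¹ = (eps m b)⁻¹ * eps c m * eps m b from
          epsL2 hab ham hbm]
        exact mul_mem (mul_mem (inv_mem (eps_mem_in_Dsub hb).1) (eps_mem_in_Dsub hc).2)
          (eps_mem_in_Dsub hb).1
      · rw [show (eps c b)⁻¹ * eps c m * eps c b = eps m b * eps c m * (eps m b)⁻¹ from
          epsL1 hab ham hbm]
        exact mul_mem (mul_mem (eps_mem_in_Dsub hb).1 (eps_mem_in_Dsub hc).2)
          (inv_mem (eps_mem_in_Dsub hb).1)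
    · by_cases hcb : c = b
      · subst hcb
        constructor
        · rw [show eps a c * eps c m * (eps a c)⁻¹
              = (eps m c)⁻¹ * (eps a m)⁻¹ * eps m c * eps a m * eps c m from
            epsL6 hab ham hbm]
          exact mul_mem (mul_mem (mul_mem (mul_mem (inv_mem (eps_mem_in_Dsub hb).1)
            (inv_mem (eps_mem_in_Dsub ha).2)) (eps_mem_in_Dsub hb).1)
            (eps_mem_in_Dsub ha).2) (eps_mem_in_Dsub hc).2
        · rw [show (eps a c)⁻¹ * eps c m * eps a c
              = eps m c * (eps a m)⁻¹ * (eps m c)⁻¹ * eps a m * eps c m from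
            epsL5 hab ham hbm]
          exact mul_mem (mul_mem (mul_mem (mul_mem (eps_mem_in_Dsub hb).1
            (inv_mem (eps_mem_in_Dsub ha).2)) (inv_mem (eps_mem_in_Dsub hb).1))
            (eps_mem_in_Dsub ha).2) (eps_mem_in_Dsub hc).2
      · have hcomm : eps c m * eps a b = eps a b * eps c m :=
          eps_comm hca hcb ham
        constructor
        · have : eps a b * eps c m * (eps a b)⁻¹ = eps c m := by
            rw [← hcomm]; group
          rw [this]; exact (eps_mem_in_Dsub hc).2
        · have : (eps a b)⁻¹ * eps c m * eps a b = eps c m := by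
            rw [mul_assoc, hcomm]; group
          rw [this]; exact (eps_mem_in_Dsub hc).2

lemma eps_mem_normalizer {n : ℕ} {m a b : Fin n} (ha : a < m) (hb : b < m) (hab : a ≠ b) :
    eps a b ∈ Subgroup.normalizer ((Dsub m : Subgroup (MulAut (FreeGroup (Fin n)))) : Set (MulAut (FreeGroup (Fin n)))) := by
  rw [Subgroup.mem_normalizer_iff]
  intro g
  have h1 := conj_mem_closure (S := {e | ∃ t : Fin n, t < m ∧ (e = eps m t ∨ e = eps t m)})
    (e := eps a b) (fun s hs => (eps_conj_gen ha hb hab s hs).1)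
  have h2 := conj_mem_closure (S := {e | ∃ t : Fin n, t < m ∧ (e = eps m t ∨ e = eps t m)})
    (e := (eps a b)⁻¹) (fun s hs => by simpa [Dsub] using (eps_conj_gen ha hb hab s hs).2)
  constructor
  · exact fun hg => h1 g hg
  · intro hg
    have := h2 _ hg
    simpa [mul_assoc, Dsub] using this


/-- For integers `2 ≤ k < l ≤ n`, the subgroup `D_{k-1}` lies in the normalizer of
`D_{l-1}` (so conjugation by any element of `D_{k-1}` preserves `D_{l-1}`).
Here the paper's `D_{k-1}` has generators with top index `k`, i.e. `k - 1` in
0-based indexing. -/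
theorem Dsub_le_normalizer (n k l : ℕ) (hk : 2 ≤ k) (hkl : k < l) (hl : l ≤ n) :
    Dsub (n := n) ⟨k - 1, by omega⟩ ≤ Subgroup.normalizer ((Dsub (n := n) ⟨l - 1, by omega⟩ : Subgroup (MulAut (FreeGroup (Fin n)))) : Set (MulAut (FreeGroup (Fin n)))) := by
  apply (Subgroup.closure_le _).mpr
  rintro e ⟨t, ht, rfl | rfl⟩
  · have hKm : (⟨k - 1, by omega⟩ : Fin n) < ⟨l - 1, by omega⟩ := by
      simp [Fin.lt_def]; omega
    exact eps_mem_normalizer hKm (lt_trans ht hKm) (Ne.symm (ne_of_lt ht))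
  · have hKm : (⟨k - 1, by omega⟩ : Fin n) < ⟨l - 1, by omega⟩ := by
      simp [Fin.lt_def]; omega
    exact eps_mem_normalizer (lt_trans ht hKm) hKm (ne_of_lt ht)
end

section
/- In Aut(F_n) the generators of the pure braid group P_n can be expressed through the basis-conjugating automorphisms as follows: a_{i,i+1} = ε_{i,i+1}^{-1} ε_{i+1,i}^{-1} for i = 1,…,n−1, and for 2 ≤ i+1 < j ≤ n, a_{ij} = ε_{j-1,i} ε_{j-2,i} ⋯ ε_{i+1,i} (ε_{ij}^{-1} ε_{ji}^{-1}) ε_{i+1,i}^{-1} ⋯ ε_{j-2,i}^{-1} ε_{j-1,i}^{-1} = ε_{j-1,j}^{-1} ε_{j-2,j}^{-1} ⋯ ε_{i+1,j}^{-1} (ε_{ij}^{-1} ε_{ji}^{-1}) ε_{i+1,j} ⋯ ε_{j-2,j} ε_{j-1,j}. -/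
/-- The braid automorphism: `x_i ↦ x_i x_j x_i⁻¹`, `x_j ↦ x_i`, `x_l ↦ x_l`. -/
def braidGen {n : ℕ} (i j : Fin n) : MulAut (FreeGroup (Fin n)) :=
  MonoidHom.toMulEquiv
    (FreeGroup.lift fun l =>
      if l = i then FreeGroup.of i * FreeGroup.of j * (FreeGroup.of i)⁻¹
      else if l = j then FreeGroup.of i else FreeGroup.of l)
    (FreeGroup.lift fun l =>
      if l = i then FreeGroup.of j
      else if l = j then (FreeGroup.of j)⁻¹ * FreeGroup.of i * FreeGroup.of j
      else FreeGroup.of l)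
    (by ext l; by_cases h : l = i <;> by_cases h2 : l = j <;> by_cases h3 : j = i <;>
      simp_all [mul_assoc])
    (by ext l; by_cases h : l = i <;> by_cases h2 : l = j <;> by_cases h3 : j = i <;>
      simp_all [mul_assoc])

/-- The braid generator σ_k (0-based), the identity if `k` is out of range. -/
def sigmaNat (n k : ℕ) : MulAut (FreeGroup (Fin n)) :=
  if h : k + 1 < n then braidGen ⟨k, by omega⟩ ⟨k + 1, h⟩ else 1

/-- The Mathlib product `σ_{i+1} * σ_{i+2} * ⋯ * σ_{j-1}`, i.e. the transcription of the
paper's word `σ_{j-1} σ_{j-2} ⋯ σ_{i+1}` (0-based indices). -/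
def aConj (n i j : ℕ) : MulAut (FreeGroup (Fin n)) :=
  (((List.range (j - 1 - i)).map fun t => sigmaNat n (j - 1 - t)).reverse).prod

/-- The pure braid generator `a_{ij} = σ_{j-1} ⋯ σ_{i+1} σ_i² σ_{i+1}⁻¹ ⋯ σ_{j-1}⁻¹`
(paper's word, 0-based indices `i < j`; for `j = i + 1` it is `σ_i²`),
transcribed into Mathlib's composition order. -/
def a0 (n i j : ℕ) : MulAut (FreeGroup (Fin n)) :=
  (aConj n i j)⁻¹ * (sigmaNat n i) ^ 2 * aConj n i j

/-! Automorphisms of `F_n` are compared on the generators. By induction on `j`, `a_{ij}`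
conjugates `x_i` and `x_j` by `x_i x_j`, each `x_l` with `i < l < j` by `⁅x_i, x_j⁆`, and fixes
the other generators; `ε_{ij}⁻¹ ε_{ji}⁻¹` conjugates `x_i`, `x_j` by `x_i x_j` and fixes the rest.
For fixed `k` the `ε_{l,k}` commute, and their product over `i < l < j` conjugates exactly those
`x_l` by `x_k`. For `k = i` and `k = j` this product intertwines `ε_{ij}⁻¹ ε_{ji}⁻¹` with
`a_{ij}`, because `(x_i x_j) x_i⁻¹ (x_i x_j)⁻¹ = ⁅x_i, x_j⁆ x_i⁻¹` and
`(x_i x_j) x_j⁻¹ (x_i x_j)⁻¹ ⁅x_i, x_j⁆ = x_j⁻¹`. -/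

open FreeGroup (of ext_hom)
open scoped commutatorElement

namespace PureBraid

variable {n : ℕ}

theorem mulAut_ext {f g : MulAut (FreeGroup (Fin n))} (h : ∀ l, f (of l) = g (of l)) :
    f = g :=
  MulEquiv.toMonoidHom_injective (ext_hom _ _ h)

theorem eps_apply_of (i j l : Fin n) :
    eps i j (of l) = if l = i then (of j)⁻¹ * of i * of j else of l := by
  simp [eps, MonoidHom.toMulEquiv]

theorem eps_inv_apply_of (i j l : Fin n) :
    (eps i j)⁻¹ (of l) = if l = i then of j * of i * (of j)⁻¹ else of l := by
  simp [eps, MonoidHom.toMulEquiv, MulAut.inv_def]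

theorem braidGen_apply_of (i j l : Fin n) :
    braidGen i j (of l) =
      if l = i then of i * of j * (of i)⁻¹ else if l = j then of i else of l := by
  simp [braidGen, MonoidHom.toMulEquiv]

theorem braidGen_inv_apply_of (i j l : Fin n) :
    (braidGen i j)⁻¹ (of l) =
      if l = i then of j else if l = j then (of j)⁻¹ * of i * of j else of l := by
  simp [braidGen, MonoidHom.toMulEquiv, MulAut.inv_def]

theorem eps_inv_mul_eps_inv_apply_of {i j : Fin n} (hij : i ≠ j) (l : Fin n) :
    ((eps j i)⁻¹ * (eps i j)⁻¹) (of l) =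
      if l = i ∨ l = j then of i * of j * of l * (of i * of j)⁻¹ else of l := by
  rw [MulAut.mul_apply]
  by_cases hi : l = i
  · subst hi
    simp only [eps_inv_apply_of, map_mul, map_inv, if_neg hij, if_true, true_or]
    group
  · by_cases hj : l = j
    · subst hj
      simp only [eps_inv_apply_of, if_neg hi, if_true, or_true]
      group
    · simp only [eps_inv_apply_of, if_neg hi, if_neg hj, if_neg (not_or.mpr ⟨hi, hj⟩)]

theorem prod_map_eps_apply_of {k : Fin n} {ls : List (Fin n)} (hk : k ∉ ls) (hls : ls.Nodup)
    (l : Fin n) :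
    (ls.map (eps · k)).prod (of l) = if l ∈ ls then (of k)⁻¹ * of l * of k else of l := by
  induction ls with
  | nil => simp
  | cons a ls ih =>
    obtain ⟨hka, hk⟩ := not_or.mp (List.mem_cons.not.mp hk)
    obtain ⟨ha, hls⟩ := List.nodup_cons.mp hls
    rw [List.map_cons, List.prod_cons, MulAut.mul_apply, ih hk hls]
    by_cases hl : l ∈ ls
    · have hla : l ≠ a := by rintro rfl; exact ha hl
      simp only [if_pos hl, if_pos (List.mem_cons_of_mem a hl), map_mul, map_inv, eps_apply_of,
        if_neg hka, if_neg hla]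
    · by_cases hla : l = a
      · subst hla
        simp only [if_neg hl, List.mem_cons_self, if_true, eps_apply_of]
      · simp only [eps_apply_of, List.mem_cons, hla, hl, or_self, if_false]

theorem prod_reverse_map_eps {k : Fin n} {ls : List (Fin n)} (hk : k ∉ ls) (hls : ls.Nodup) :
    (ls.map (eps · k)).reverse.prod = (ls.map (eps · k)).prod :=
  mulAut_ext fun l => by
    rw [← List.map_reverse, prod_map_eps_apply_of (by rwa [List.mem_reverse])
      (List.nodup_reverse.mpr hls), prod_map_eps_apply_of hk hls]
    simp only [List.mem_reverse]

theorem sub_one_sub_lt {j : ℕ} (hj : j < n) (t : ℕ) : j - 1 - t < n := by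
  omega

def indicesBetween (i : ℕ) {j : ℕ} (hj : j < n) : List (Fin n) :=
  (List.range (j - 1 - i)).map fun t => ⟨j - 1 - t, sub_one_sub_lt hj t⟩

theorem mem_indicesBetween {i j : ℕ} (hj : j < n) {l : Fin n} :
    l ∈ indicesBetween i hj ↔ i < l ∧ (l : ℕ) < j := by
  simp only [indicesBetween, List.mem_map, List.mem_range, Fin.ext_iff]
  constructor
  · rintro ⟨t, ht, htl⟩
    omega
  · intro h
    exact ⟨j - 1 - l, by omega, by omega⟩

theorem nodup_indicesBetween (i : ℕ) {j : ℕ} (hj : j < n) : (indicesBetween i hj).Nodup :=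
  List.nodup_range.map_on fun s hs t ht hst => by
    simp only [List.mem_range, Fin.mk.injEq] at hs ht hst
    omega

theorem map_eps_indicesBetween (i : ℕ) {j : ℕ} (hj : j < n) (k : Fin n) :
    (indicesBetween i hj).map (eps · k) =
      (List.range (j - 1 - i)).map fun t => eps (⟨j - 1 - t, sub_one_sub_lt hj t⟩ : Fin n) k :=
  List.map_map

def epsBetween (i : ℕ) {j : ℕ} (hj : j < n) (k : Fin n) : MulAut (FreeGroup (Fin n)) :=
  ((indicesBetween i hj).map (eps · k)).prod

theorem epsBetween_apply_of {i j : ℕ} (hj : j < n) {k : Fin n} (hk : ¬(i < k ∧ (k : ℕ) < j))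
    (l : Fin n) :
    epsBetween i hj k (of l) = if i < l ∧ (l : ℕ) < j then (of k)⁻¹ * of l * of k else of l := by
  rw [epsBetween, prod_map_eps_apply_of (mt (mem_indicesBetween hj).mp hk)
    (nodup_indicesBetween i hj)]
  simp only [mem_indicesBetween]

theorem sigmaNat_of_lt {k : ℕ} (h : k + 1 < n) :
    sigmaNat n k = braidGen (⟨k, Nat.lt_of_succ_lt h⟩ : Fin n) ⟨k + 1, h⟩ :=
  dif_pos h

theorem aConj_succ_self (i : ℕ) : aConj n i (i + 1) = 1 := by
  simp [aConj]

theorem aConj_succ {i j : ℕ} (hij : i < j) :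
    aConj n i (j + 1) = aConj n i j * sigmaNat n j := by
  unfold aConj
  rw [show j + 1 - 1 - i = j - 1 - i + 1 by omega, List.range_succ_eq_map, List.map_cons,
    List.map_map, List.reverse_cons, List.prod_append, List.prod_singleton, Nat.add_sub_cancel,
    Nat.sub_zero]
  congr 4
  funext t
  simp only [Function.comp_apply]
  congr 1
  omega

theorem a0_succ_self (i : ℕ) : a0 n i (i + 1) = sigmaNat n i ^ 2 := by
  simp [a0, aConj_succ_self]

theorem a0_succ {i j : ℕ} (hij : i < j) :
    a0 n i (j + 1) = (sigmaNat n j)⁻¹ * a0 n i j * sigmaNat n j := by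
  simp only [a0, aConj_succ hij, mul_inv_rev, mul_assoc]

theorem a0_apply_of {i j : ℕ} (hij : i < j) (hj : j < n) (l : Fin n) :
    a0 n i j (of l) =
      let xi := of (⟨i, hij.trans hj⟩ : Fin n)
      let xj := of (⟨j, hj⟩ : Fin n)
      if (l : ℕ) = i then xi * xj * xi * (xi * xj)⁻¹
      else if (l : ℕ) = j then xi * xj * xj * (xi * xj)⁻¹
      else if i < l ∧ (l : ℕ) < j then ⁅xi, xj⁆ * of l * ⁅xi, xj⁆⁻¹
      else of l := by
  obtain ⟨l, hl⟩ := l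
  induction j, hij using Nat.le_induction generalizing l with
  | base =>
    rw [a0_succ_self, sigmaNat_of_lt hj, sq, MulAut.mul_apply]
    simp only [braidGen_apply_of, apply_ite (DFunLike.coe _), map_mul, map_inv, Fin.mk.injEq,
      commutatorElement_def, Nat.succ_eq_add_one]
    split_ifs <;> subst_vars <;> first | omega | group
  | succ j hij ih =>
    rw [a0_succ hij, MulAut.mul_apply, MulAut.mul_apply, sigmaNat_of_lt hj]
    simp only [braidGen_apply_of, apply_ite (DFunLike.coe _), map_mul,
      map_inv, ih (by omega), braidGen_inv_apply_of, Fin.mk.injEq, commutatorElement_def]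
    split_ifs <;> subst_vars <;> first | omega | group

theorem epsBetween_mul_a0 {i j : ℕ} (hij : i < j) (hj : j < n) :
    epsBetween i hj ⟨i, hij.trans hj⟩ * a0 n i j =
      (eps ⟨j, hj⟩ ⟨i, hij.trans hj⟩)⁻¹ * (eps ⟨i, hij.trans hj⟩ ⟨j, hj⟩)⁻¹ *
        epsBetween i hj ⟨i, hij.trans hj⟩ := by
  refine mulAut_ext fun ⟨l, hl⟩ => ?_
  have hE := eps_inv_mul_eps_inv_apply_of (i := (⟨i, hij.trans hj⟩ : Fin n)) (j := ⟨j, hj⟩)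
    (by simp only [ne_eq, Fin.mk.injEq]; omega)
  have hL := epsBetween_apply_of hj (i := i) (k := ⟨i, hij.trans hj⟩) (by dsimp only; omega)
  simp only [MulAut.mul_apply, a0_apply_of hij hj, hL, hE, apply_ite (DFunLike.coe _), map_mul,
    map_inv, Fin.mk.injEq, true_or, commutatorElement_def]
  split_ifs <;> subst_vars <;> first | omega | group

theorem a0_mul_epsBetween {i j : ℕ} (hij : i < j) (hj : j < n) :
    a0 n i j * epsBetween i hj ⟨j, hj⟩ =
      epsBetween i hj ⟨j, hj⟩ *
        ((eps ⟨j, hj⟩ ⟨i, hij.trans hj⟩)⁻¹ * (eps ⟨i, hij.trans hj⟩ ⟨j, hj⟩)⁻¹) := by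
  refine mulAut_ext fun ⟨l, hl⟩ => ?_
  have hE := eps_inv_mul_eps_inv_apply_of (i := (⟨i, hij.trans hj⟩ : Fin n)) (j := ⟨j, hj⟩)
    (by simp only [ne_eq, Fin.mk.injEq]; omega)
  have hP := epsBetween_apply_of hj (i := i) (k := ⟨j, hj⟩) (by dsimp only; omega)
  simp only [MulAut.mul_apply, a0_apply_of hij hj, hP, hE, apply_ite (DFunLike.coe _), map_mul,
    map_inv, Fin.mk.injEq, commutatorElement_def]
  split_ifs <;> subst_vars <;> first | omega | group

end PureBraid

/-- Lemma 3.4: in `Aut(F_n)` the pure braid generators are expressed through the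
basis-conjugating automorphisms (0-based indices `i < j < n`):
`a_{ij} = ε_{j-1,i} ⋯ ε_{i+1,i} (ε_{ij}⁻¹ ε_{ji}⁻¹) ε_{i+1,i}⁻¹ ⋯ ε_{j-1,i}⁻¹
        = ε_{j-1,j}⁻¹ ⋯ ε_{i+1,j}⁻¹ (ε_{ij}⁻¹ ε_{ji}⁻¹) ε_{i+1,j} ⋯ ε_{j-1,j}`,
in particular `a_{i,i+1} = ε_{i,i+1}⁻¹ ε_{i+1,i}⁻¹`; each of the paper's words
(composing left-to-right) is transcribed into Mathlib's order (right-to-left). -/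
theorem pure_braid_gen_eq_eps (n i j : ℕ) (hij : i < j) (hj : j < n) :
    (a0 n i j =
      ((((List.range (j - 1 - i)).map fun t =>
          eps (⟨j - 1 - t, by omega⟩ : Fin n) (⟨i, by omega⟩ : Fin n)).reverse).prod)⁻¹ *
        ((eps (⟨j, hj⟩ : Fin n) (⟨i, by omega⟩ : Fin n))⁻¹ *
          (eps (⟨i, by omega⟩ : Fin n) (⟨j, hj⟩ : Fin n))⁻¹) *
        ((((List.range (j - 1 - i)).map fun t =>
          eps (⟨j - 1 - t, by omega⟩ : Fin n) (⟨i, by omega⟩ : Fin n)).reverse).prod)) ∧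
    (a0 n i j =
      (((List.range (j - 1 - i)).map fun t =>
          eps (⟨j - 1 - t, by omega⟩ : Fin n) (⟨j, hj⟩ : Fin n)).prod) *
        ((eps (⟨j, hj⟩ : Fin n) (⟨i, by omega⟩ : Fin n))⁻¹ *
          (eps (⟨i, by omega⟩ : Fin n) (⟨j, hj⟩ : Fin n))⁻¹) *
        (((List.range (j - 1 - i)).map fun t =>
          eps (⟨j - 1 - t, by omega⟩ : Fin n) (⟨j, hj⟩ : Fin n)).prod)⁻¹) := by
  simp only [← PureBraid.map_eps_indicesBetween i hj]
  rw [PureBraid.prod_reverse_map_eps (by simp [PureBraid.mem_indicesBetween])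
    (PureBraid.nodup_indicesBetween i hj), mul_assoc]
  exact ⟨eq_inv_mul_of_mul_eq (PureBraid.epsBetween_mul_a0 hij hj),
    eq_mul_inv_of_mul_eq (PureBraid.a0_mul_epsBetween hij hj)⟩
end

section
/- For every n ≥ 2, the abelianization Cb_n/Cb_n' of the group Cb_n of basis-conjugating automorphisms of F_n is a free abelian group of rank n(n−1), i.e. isomorphic to Z^{n(n−1)}. -/
/-- Discrete Heisenberg-like group: `ℤ³` with twisted multiplication. -/
structure H3 where
  a : ℤ
  b : ℤ
  c : ℤ

namespace H3

@[ext] lemma ext' {x y : H3} (ha : x.a = y.a) (hb : x.b = y.b) (hc : x.c = y.c) : x = y := by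
  cases x; cases y; simp_all

instance : Mul H3 := ⟨fun x y => ⟨x.a + y.a, x.b + y.b, x.c + y.c + x.a * y.b - x.b * y.a⟩⟩
instance : One H3 := ⟨⟨0, 0, 0⟩⟩
instance : Inv H3 := ⟨fun x => ⟨-x.a, -x.b, -x.c⟩⟩

@[simp] lemma mul_a (x y : H3) : (x * y).a = x.a + y.a := rfl
@[simp] lemma mul_b (x y : H3) : (x * y).b = x.b + y.b := rfl
@[simp] lemma mul_c (x y : H3) : (x * y).c = x.c + y.c + x.a * y.b - x.b * y.a := rfl
@[simp] lemma inv_a (x : H3) : x⁻¹.a = -x.a := rfl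
@[simp] lemma inv_b (x : H3) : x⁻¹.b = -x.b := rfl
@[simp] lemma inv_c (x : H3) : x⁻¹.c = -x.c := rfl
@[simp] lemma one_a : (1 : H3).a = 0 := rfl
@[simp] lemma one_b : (1 : H3).b = 0 := rfl
@[simp] lemma one_c : (1 : H3).c = 0 := rfl

instance : Group H3 where
  mul_assoc x y z := by apply ext' <;> simp <;> ring
  one_mul x := by apply ext' <;> simp
  mul_one x := by apply ext' <;> simp
  inv_mul_cancel x := by apply ext' <;> simp <;> ring

lemma conj_lemma (w : H3) : w⁻¹ * (⟨1,0,0⟩ : H3) * w = ⟨1, 0, 2 * w.b⟩ := by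
  apply ext' <;> simp <;> ring

/-- projection to the `b`-coordinate, as a monoid hom. -/
def Hb : H3 →* Multiplicative ℤ where
  toFun x := Multiplicative.ofAdd x.b
  map_one' := rfl
  map_mul' x y := by simp [← ofAdd_add]

@[simp] lemma Hb_apply (x : H3) : Hb x = Multiplicative.ofAdd x.b := rfl

end H3

/-- counting homomorphism into H3. -/
def nu {n : ℕ} (i j : Fin n) : FreeGroup (Fin n) →* H3 :=
  FreeGroup.lift fun l => if l = i then ⟨1,0,0⟩ else if l = j then ⟨0,1,0⟩ else 1

@[simp] lemma nu_of {n : ℕ} (i j l : Fin n) :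
    nu i j (FreeGroup.of l) = if l = i then ⟨1,0,0⟩ else if l = j then ⟨0,1,0⟩ else 1 := by
  simp [nu]

/-- Every element of `Cb n` maps each generator to a conjugate of itself. -/
lemma Cb_conj {n : ℕ} {φ : MulAut (FreeGroup (Fin n))} (hφ : φ ∈ Cb n) (i : Fin n) :
    ∃ w, φ (FreeGroup.of i) = w⁻¹ * FreeGroup.of i * w := by
  refine Subgroup.closure_induction
    (p := fun ψ _ => ∀ i, ∃ w, ψ (FreeGroup.of i) = w⁻¹ * FreeGroup.of i * w)
    ?_ ?_ ?_ ?_ hφ i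
  · rintro x ⟨k, l, hkl, rfl⟩ i
    by_cases h : i = k
    · subst h
      exact ⟨FreeGroup.of l, by simp [eps_of]⟩
    · exact ⟨1, by simp [eps_of, h]⟩
  · intro i; exact ⟨1, by simp⟩
  · intro x y hx hy Hx Hy i
    obtain ⟨w, hw⟩ := Hy i
    obtain ⟨v, hv⟩ := Hx i
    refine ⟨v * x w, ?_⟩
    show x (y (FreeGroup.of i)) = _
    rw [hw]
    simp only [map_mul, map_inv, hv]
    group
  · intro x hx H i
    obtain ⟨w, hw⟩ := H i
    refine ⟨(x.symm w)⁻¹, ?_⟩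
    have h2 := congrArg x.symm hw
    simp only [MulEquiv.symm_apply_apply, map_mul, map_inv] at h2
    show x.symm (FreeGroup.of i) = _
    rw [inv_inv]
    have h3 : x.symm (FreeGroup.of i) = (x.symm w) * FreeGroup.of i * (x.symm w)⁻¹ := by
      conv_rhs => rw [h2]
      group
    rw [h3]

/-- Elements of `Cb n` preserve the `b`-count. -/
lemma Cb_b {n : ℕ} (i j : Fin n) {φ : MulAut (FreeGroup (Fin n))} (hφ : φ ∈ Cb n)
    (g : FreeGroup (Fin n)) : (nu i j (φ g)).b = (nu i j g).b := by
  refine Subgroup.closure_induction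
    (p := fun ψ _ => ∀ g, (nu i j (ψ g)).b = (nu i j g).b) ?_ ?_ ?_ ?_ hφ g
  · rintro x ⟨k, l, hkl, rfl⟩ g
    have key : (H3.Hb.comp ((nu i j).comp (eps k l).toMonoidHom)) = H3.Hb.comp (nu i j) := by
      ext m
      by_cases h : m = k <;>
        simp [eps_of, h, ← ofAdd_add] <;> split_ifs <;> simp_all <;> ring
    have := DFunLike.congr_fun key g
    simpa using this
  · intro g; rfl
  · intro x y hx hy Hx Hy g
    show (nu i j (x (y g))).b = _
    rw [Hx, Hy]
  · intro x hx H g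
    have := H (x⁻¹ g)
    rw [show x ((x⁻¹ : MulAut _) g) = g from x.apply_symm_apply g] at this
    exact this.symm

lemma nu_conj {n : ℕ} (i j : Fin n) (w : FreeGroup (Fin n)) :
    nu i j (w⁻¹ * FreeGroup.of i * w) = ⟨1, 0, 2 * (nu i j w).b⟩ := by
  have h0 : nu i j (FreeGroup.of i) = ⟨1,0,0⟩ := by simp
  rw [map_mul, map_mul, map_inv, h0, H3.conj_lemma]

lemma tau_mul {n : ℕ} (i j : Fin n) {φ ψ : MulAut (FreeGroup (Fin n))}
    (hφ : φ ∈ Cb n) (hψ : ψ ∈ Cb n) :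
    (nu i j ((φ * ψ) (FreeGroup.of i))).c
      = (nu i j (φ (FreeGroup.of i))).c + (nu i j (ψ (FreeGroup.of i))).c := by
  obtain ⟨w, hw⟩ := Cb_conj hψ i
  obtain ⟨v, hv⟩ := Cb_conj hφ i
  have h1 : (φ * ψ) (FreeGroup.of i) = (v * φ w)⁻¹ * FreeGroup.of i * (v * φ w) := by
    show φ (ψ (FreeGroup.of i)) = _
    rw [hw, map_mul, map_mul, map_inv, hv]
    group
  rw [h1, hw, hv, nu_conj, nu_conj, nu_conj]
  simp [Cb_b i j hφ w]
  ring

lemma tau_eps {n : ℕ} (i j k l : Fin n) (hkl : k ≠ l) :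
    (nu i j ((eps k l) (FreeGroup.of i))).c = if k = i ∧ l = j then 2 else 0 := by
  rw [eps_of]
  by_cases h : i = k
  · subst h
    rw [if_pos rfl, nu_conj]
    have hl : l ≠ i := Ne.symm hkl
    by_cases hj : l = j
    · subst hj; simp [hl]
    · simp [hj, hl]
  · rw [if_neg (fun hh => h hh)]
    have h2 : ¬(k = i ∧ l = j) := fun hh => h hh.1.symm
    simp [h2]

lemma card_pairNe (n : ℕ) :
    Fintype.card {p : Fin n × Fin n // p.1 ≠ p.2} = n * (n - 1) := by
  have h1 : Fintype.card {p : Fin n × Fin n // p.1 = p.2} = n := by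
    have e : {p : Fin n × Fin n // p.1 = p.2} ≃ Fin n :=
      { toFun := fun x => x.1.1
        invFun := fun i => ⟨(i, i), rfl⟩
        left_inv := fun x => Subtype.ext (Prod.ext rfl x.2)
        right_inv := fun i => rfl }
    rw [Fintype.card_congr e, Fintype.card_fin]
  have h2 := Fintype.card_subtype_compl (fun p : Fin n × Fin n => p.1 = p.2)
  have h3 : Fintype.card {p : Fin n × Fin n // p.1 ≠ p.2}
      = Fintype.card {p : Fin n × Fin n // ¬ p.1 = p.2} := rfl
  rw [h3, h2, h1, Fintype.card_prod, Fintype.card_fin]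
  cases n with
  | zero => rfl
  | succ k =>
    have : (k + 1) * (k + 1) = (k + 1) * k + (k + 1) := by ring
    simp only [Nat.succ_sub_one]
    omega

/-- Proposition 4.1 b): for every `n ≥ 2`, the abelianization `Cb_n/Cb_n'` of the group
of basis-conjugating automorphisms is a free abelian group of rank `n(n-1)`,
i.e. isomorphic to `ℤ^{n(n-1)}`. -/
theorem abelianization_Cb (n : ℕ) (hn : 2 ≤ n) :
    Nonempty (Abelianization (Cb n) ≃* Multiplicative (Fin (n * (n - 1)) → ℤ)) := by
  classical
  set m := n * (n - 1) with hm
  have hcard : Fintype.card {p : Fin n × Fin n // p.1 ≠ p.2} = m := card_pairNe n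
  let pair : Fin m ≃ {p : Fin n × Fin n // p.1 ≠ p.2} := (Fintype.equivFinOfCardEq hcard).symm
  let E : {p : Fin n × Fin n // p.1 ≠ p.2} → Cb n := fun q =>
    ⟨eps q.1.1 q.1.2, Subgroup.subset_closure ⟨q.1.1, q.1.2, q.2, rfl⟩⟩
  let σ : Multiplicative (Fin m → ℤ) →* Abelianization (Cb n) :=
    MonoidHom.mk' (fun f => ∏ k : Fin m, (Abelianization.of (E (pair k))) ^ (f.toAdd k))
      (by
        intro f g
        rw [← Finset.prod_mul_distrib]
        refine Finset.prod_congr rfl fun k _ => ?_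
        show (Abelianization.of (E (pair k))) ^ (f.toAdd k + g.toAdd k) = _
        rw [zpow_add])
  let tau : {p : Fin n × Fin n // p.1 ≠ p.2} → (Cb n →* Multiplicative ℤ) := fun q =>
    MonoidHom.mk' (fun φ => Multiplicative.ofAdd (nu q.1.1 q.1.2 (φ.1 (FreeGroup.of q.1.1))).c)
      (by
        intro φ ψ
        have h := tau_mul q.1.1 q.1.2 φ.2 ψ.2
        exact (congrArg Multiplicative.ofAdd h).trans (ofAdd_add _ _))
  let Φ : {p : Fin n × Fin n // p.1 ≠ p.2} → (Abelianization (Cb n) →* Multiplicative ℤ) :=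
    fun q => Abelianization.lift (tau q)
  have tauE : ∀ q q' : {p : Fin n × Fin n // p.1 ≠ p.2},
      tau q (E q') = Multiplicative.ofAdd (if q' = q then (2:ℤ) else 0) := by
    intro q q'
    show Multiplicative.ofAdd
        (nu q.1.1 q.1.2 ((eps q'.1.1 q'.1.2) (FreeGroup.of q.1.1))).c = _
    rw [tau_eps _ _ _ _ q'.2]
    congr 1
    by_cases h : q' = q
    · simp [h]
    · rw [if_neg, if_neg h]
      rintro ⟨h1, h2⟩
      exact h (Subtype.ext (Prod.ext h1 h2))
  have phi_sigma : ∀ (f : Multiplicative (Fin m → ℤ)) (k : Fin m),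
      Φ (pair k) (σ f) = Multiplicative.ofAdd (2 * f.toAdd k) := by
    intro f k
    show Φ (pair k) (∏ k' : Fin m, (Abelianization.of (E (pair k'))) ^ (f.toAdd k')) = _
    rw [map_prod]
    have hterm : ∀ k' : Fin m,
        Φ (pair k) ((Abelianization.of (E (pair k'))) ^ (f.toAdd k'))
          = (Multiplicative.ofAdd (if k' = k then (2:ℤ) else 0)) ^ (f.toAdd k') := by
      intro k'
      rw [map_zpow]
      congr 1
      show Abelianization.lift (tau (pair k)) (Abelianization.of (E (pair k'))) = _
      rw [Abelianization.lift_apply_of, tauE]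
      by_cases hk : k' = k
      · simp [hk]
      · rw [if_neg (fun hh => hk (pair.injective hh)), if_neg hk]
    rw [Finset.prod_congr rfl fun k' _ => hterm k']
    rw [Finset.prod_eq_single k (fun k' _ h => by rw [if_neg h]; simp) (by simp)]
    rw [if_pos rfl, ← ofAdd_zsmul]
    congr 1
    simp [smul_eq_mul]; ring
  have hinj : Function.Injective σ := by
    intro f g h
    have h2 : ∀ k, (2:ℤ) * f.toAdd k = 2 * g.toAdd k := by
      intro k
      have := congrArg (Φ (pair k)) h
      rw [phi_sigma, phi_sigma] at this
      exact Multiplicative.ofAdd.injective this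
    have h3 : f.toAdd = g.toAdd := funext fun k => by have := h2 k; omega
    exact Multiplicative.toAdd.injective h3
  have sigma_single : ∀ k : Fin m,
      σ (Multiplicative.ofAdd (Pi.single k (1:ℤ))) = Abelianization.of (E (pair k)) := by
    intro k
    have hrfl : σ (Multiplicative.ofAdd (Pi.single k (1:ℤ)))
        = ∏ k' : Fin m, (Abelianization.of (E (pair k'))) ^ ((Pi.single k (1:ℤ) : Fin m → ℤ) k') := rfl
    rw [hrfl, Finset.prod_eq_single k
      (fun k' _ h => by rw [Pi.single_eq_of_ne h]; simp) (by simp)]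
    rw [Pi.single_eq_same, zpow_one]
  have key : ∀ g (hg : g ∈ Subgroup.closure {e | ∃ i j : Fin n, i ≠ j ∧ e = eps i j}),
      Abelianization.of (⟨g, hg⟩ : Cb n) ∈ σ.range := by
    intro g hg
    refine Subgroup.closure_induction
      (p := fun g hg => Abelianization.of (⟨g, hg⟩ : Cb n) ∈ σ.range) ?_ ?_ ?_ ?_ hg
    · rintro x ⟨i, j, hij, rfl⟩
      refine ⟨Multiplicative.ofAdd (Pi.single (pair.symm ⟨(i, j), hij⟩) (1:ℤ)), ?_⟩
      rw [sigma_single, Equiv.apply_symm_apply]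
    · show Abelianization.of (1 : Cb n) ∈ σ.range
      rw [map_one]; exact one_mem _
    · intro x y hx hy hpx hpy
      show Abelianization.of ((⟨x, hx⟩ : Cb n) * ⟨y, hy⟩) ∈ σ.range
      rw [map_mul]; exact mul_mem hpx hpy
    · intro x hx hpx
      show Abelianization.of ((⟨x, hx⟩ : Cb n)⁻¹) ∈ σ.range
      rw [map_inv]; exact inv_mem hpx
  have hsurj : Function.Surjective σ := by
    intro y
    refine QuotientGroup.induction_on y fun x => ?_
    obtain ⟨f, hf⟩ := key x.1 x.2
    exact ⟨f, hf⟩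
  exact ⟨(MulEquiv.ofBijective σ ⟨hinj, hsurj⟩).symm⟩
end

section
/- For every n ≥ 2, the intersection B_n ∩ Inn(F_n) of the braid group B_n with the group of inner automorphisms of F_n is an infinite cyclic group generated by the inner automorphism given by conjugation by the element x_1 x_2 ⋯ x_n. -/
/-- The braid group `B_n` realized inside `Aut(F_n)`, generated by `σ_1, …, σ_{n-1}`. -/
def BraidAut (n : ℕ) : Subgroup (MulAut (FreeGroup (Fin n))) :=
  Subgroup.closure {e | ∃ k : ℕ, k + 1 < n ∧ e = sigmaNat n k}

theorem MulAut.conj_apply_eq_self_iff {G : Type*} [Group G] {g x : G} :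
    MulAut.conj g x = x ↔ Commute g x := by
  rw [MulAut.conj_apply, mul_inv_eq_iff_eq_mul]
  rfl

theorem MulAut.conj_mul_pow {G : Type*} [Group G] (a : G) (ρ : MulAut G) (M : ℕ) :
    (MulAut.conj a * ρ) ^ M =
      MulAut.conj ((List.range M).map fun k => (ρ ^ k) a).prod * ρ ^ M := by
  induction M with
  | zero => simp
  | succ M ih =>
    have hswap : ρ ^ M * MulAut.conj a = MulAut.conj ((ρ ^ M) a) * ρ ^ M := by
      ext x
      simp [MulAut.conj_apply]
    rw [pow_succ, ih, mul_assoc, ← mul_assoc (ρ ^ M), hswap, List.prod_range_succ, map_mul,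
      pow_succ]
    group

theorem IsFreeGroup.isCyclic_of_isMulCommutative (G : Type*) [Group G] [IsFreeGroup G]
    [IsMulCommutative G] : IsCyclic G := by
  have : Subsingleton (IsFreeGroup.Generators G) := by
    refine ⟨fun a b => by_contra fun hab => ?_⟩
    classical
    let f : IsFreeGroup.Generators G → Equiv.Perm (Fin 3) :=
      fun x => if x = a then Equiv.swap 0 1 else Equiv.swap 1 2
    have := congrArg (IsFreeGroup.lift f)
      (isMulCommutative_iff.mp ‹_› (IsFreeGroup.of a) (IsFreeGroup.of b))
    simp [f, IsFreeGroup.lift_of, Ne.symm hab] at this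
    exact absurd this (by decide)
  obtain h | h := isEmpty_or_nonempty (IsFreeGroup.Generators G)
  · exact isCyclic_of_surjective _ (IsFreeGroup.toFreeGroup G).symm.surjective
  · have := uniqueOfSubsingleton (Classical.choice h)
    exact isCyclic_of_surjective _ (IsFreeGroup.toFreeGroup G).symm.surjective

namespace FreeGroup

variable {α : Type*}

theorem mulEquiv_ext {M : Type*} [Monoid M] {e₁ e₂ : FreeGroup α ≃* M}
    (h : ∀ a, e₁ (of a) = e₂ (of a)) : e₁ = e₂ :=
  MulEquiv.toMonoidHom_injective (FreeGroup.ext_hom _ _ h)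

theorem exists_mem_zpowers_of_commute {a b : FreeGroup α} (h : Commute a b) :
    ∃ c, a ∈ Subgroup.zpowers c ∧ b ∈ Subgroup.zpowers c := by
  set H := Subgroup.closure {a, b}
  have : IsMulCommutative H := Subgroup.isMulCommutative_closure (by
    simp only [Set.mem_insert_iff, Set.mem_singleton_iff]
    rintro x (rfl | rfl) y (rfl | rfl)
    exacts [rfl, h.eq, h.symm.eq, rfl])
  have := IsFreeGroup.isCyclic_of_isMulCommutative H
  obtain ⟨c, hc⟩ := IsCyclic.exists_generator (α := H)
  have key : ∀ x ∈ H, x ∈ Subgroup.zpowers (c : FreeGroup α) := fun x hx => by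
    obtain ⟨k, hk⟩ := hc ⟨x, hx⟩
    exact ⟨k, by simpa using congrArg Subtype.val hk⟩
  exact ⟨c, key a (Subgroup.subset_closure (by simp)), key b (Subgroup.subset_closure (by simp))⟩

theorem mem_zpowers_of_commute (φ : FreeGroup α →* Multiplicative ℤ) {x w : FreeGroup α}
    (hφ : φ x = Multiplicative.ofAdd 1) (h : Commute w x) : w ∈ Subgroup.zpowers x := by
  obtain ⟨c, ⟨i, rfl⟩, ⟨j, rfl⟩⟩ := exists_mem_zpowers_of_commute h
  have hj : j * Multiplicative.toAdd (φ c) = 1 := by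
    simpa using congrArg Multiplicative.toAdd hφ
  have hjj : j * j = 1 := by
    rcases Int.eq_one_or_neg_one_of_mul_eq_one hj with rfl | rfl <;> rfl
  exact ⟨i * j, show (c ^ j) ^ (i * j) = c ^ i by rw [← zpow_mul, mul_left_comm, hjj, mul_one]⟩

variable [DecidableEq α]

def exponentSum (a : α) : FreeGroup α →* Multiplicative ℤ :=
  FreeGroup.lift (Pi.mulSingle a (Multiplicative.ofAdd 1))

@[simp]
theorem exponentSum_of_self (a : α) : exponentSum a (of a) = Multiplicative.ofAdd 1 := by
  simp [exponentSum]

@[simp]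
theorem exponentSum_of_of_ne {a b : α} (h : b ≠ a) : exponentSum a (of b) = 1 := by
  simp [exponentSum, h]

theorem conj_injective [Nontrivial α] :
    Function.Injective (MulAut.conj : FreeGroup α →* MulAut (FreeGroup α)) := by
  refine (injective_iff_map_eq_one _).mpr fun w hw => ?_
  have hcomm (a : α) : w ∈ Subgroup.zpowers (of a) :=
    mem_zpowers_of_commute (exponentSum a) (by simp)
      (MulAut.conj_apply_eq_self_iff.mp (by rw [hw]; rfl))
  obtain ⟨a, b, hab⟩ := exists_pair_ne α
  obtain ⟨p, rfl⟩ := hcomm a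
  obtain ⟨q, hq⟩ := hcomm b
  have := congrArg (exponentSum a) hq
  simp [hab.symm] at this
  have hp : 0 = p := by simpa using congrArg Multiplicative.toAdd this
  simp [← hp]

end FreeGroup

theorem map_prod_range_eq_of_fixes_pair {M F : Type*} [Monoid M] [FunLike F M M]
    [MonoidHomClass F M M] (φ : F) (x : ℕ → M) {k j : ℕ} (hj : k + 2 ≤ j)
    (hfix : ∀ i, i ≠ k → i ≠ k + 1 → φ (x i) = x i)
    (hpair : φ (x k * x (k + 1)) = x k * x (k + 1)) :
    φ ((List.range j).map x).prod = ((List.range j).map x).prod := by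
  induction j, hj using Nat.le_induction with
  | base =>
    have hprefix : φ ((List.range k).map x).prod = ((List.range k).map x).prod := by
      rw [map_list_prod, List.map_map]
      exact congrArg _ (List.map_congr_left fun i hi => by
        simp only [List.mem_range] at hi
        exact hfix i (by omega) (by omega))
    rw [List.prod_range_succ, List.prod_range_succ, mul_assoc, map_mul, hprefix, hpair]
  | succ j hj ih =>
    rw [List.prod_range_succ, map_mul, ih, hfix j (by omega) (by omega)]

open FreeGroup (of exponentSum)

/-- The generator `x_{k+1}` of `F_n`, indexed from `0` by a natural number and equal to `1` when
`k ≥ n`, so that index arithmetic needs no `Fin` bounds. -/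
def letter (n k : ℕ) : FreeGroup (Fin n) := if h : k < n then of ⟨k, h⟩ else 1

def boundaryWord (n : ℕ) : FreeGroup (Fin n) := (List.ofFn fun i : Fin n => of i).prod

section

variable {n : ℕ}

theorem letter_of_lt {k : ℕ} (h : k < n) : letter n k = of ⟨k, h⟩ := dif_pos h

theorem boundaryWord_eq_prod_range_letter :
    boundaryWord n = ((List.range n).map (letter n)).prod := by
  rw [boundaryWord, List.ofFn_eq_map, ← List.map_coe_finRange_eq_range, List.map_map]
  exact congrArg _ (List.map_congr_left fun i _ => (letter_of_lt i.2).symm)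

theorem exponentSum_boundaryWord (i : Fin n) :
    exponentSum i (boundaryWord n) = Multiplicative.ofAdd 1 := by
  rw [boundaryWord, map_list_prod, List.map_ofFn, List.prod_ofFn]
  simp [exponentSum]

theorem boundaryWord_ne_one (hn : 0 < n) : boundaryWord n ≠ 1 := fun h => by
  have := exponentSum_boundaryWord (⟨0, hn⟩ : Fin n)
  rw [h, map_one] at this
  exact absurd this (by decide)

theorem sigmaNat_letter_self {k : ℕ} (hk : k + 1 < n) :
    sigmaNat n k (letter n k) = letter n k * letter n (k + 1) * (letter n k)⁻¹ := by
  rw [letter_of_lt (by omega), letter_of_lt hk]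
  simp [sigmaNat, hk, braidGen]

theorem sigmaNat_letter_succ {k : ℕ} (hk : k + 1 < n) :
    sigmaNat n k (letter n (k + 1)) = letter n k := by
  rw [letter_of_lt hk, letter_of_lt (by omega)]
  simp [sigmaNat, hk, braidGen]

theorem sigmaNat_letter_of_ne {k l : ℕ} (hk : k + 1 < n) (hlk : l ≠ k) (hlk' : l ≠ k + 1) :
    sigmaNat n k (letter n l) = letter n l := by
  by_cases hl : l < n
  · rw [letter_of_lt hl]
    simp [sigmaNat, hk, braidGen, Fin.ext_iff, hlk, hlk']
  · simp [letter, hl]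

end

theorem sigmaNat_boundaryWord {n k : ℕ} (hk : k + 1 < n) :
    sigmaNat n k (boundaryWord n) = boundaryWord n := by
  rw [boundaryWord_eq_prod_range_letter]
  refine map_prod_range_eq_of_fixes_pair _ _ (by omega)
    (fun i hik hik' => sigmaNat_letter_of_ne hk hik hik') ?_
  rw [map_mul, sigmaNat_letter_self hk, sigmaNat_letter_succ hk, inv_mul_cancel_right]

theorem braidAut_le_stabilizer_boundaryWord (n : ℕ) :
    BraidAut n ≤ MulAction.stabilizer _ (boundaryWord n) :=
  Subgroup.closure_le _ |>.mpr <| by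
    rintro _ ⟨k, hk, rfl⟩
    exact sigmaNat_boundaryWord hk

theorem prod_range_sigmaNat_letter {n d : ℕ} (hd : d < n) (i : ℕ) :
    ((List.range d).map (sigmaNat n)).prod (letter n i) =
      if i < d then MulAut.conj (letter n 0) (letter n (i + 1))
      else if i = d then letter n 0 else letter n i := by
  induction d generalizing i with
  | zero => split_ifs with h <;> simp_all
  | succ d ih =>
    have hd' : d + 1 < n := hd
    rw [List.prod_range_succ, MulAut.mul_apply]
    rcases lt_trichotomy i d with hi | rfl | hi
    · rw [sigmaNat_letter_of_ne hd' (by omega) (by omega), ih (by omega), if_pos hi,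
        if_pos (by omega)]
    · rw [sigmaNat_letter_self hd', map_mul, map_mul, map_inv, ih (by omega), ih (by omega)]
      simp [MulAut.conj_apply]
    · rcases Nat.lt_or_eq_of_le (Nat.succ_le_of_lt hi) with hi' | rfl
      · rw [sigmaNat_letter_of_ne hd' (by omega) (by omega), ih (by omega), if_neg (by omega),
          if_neg (by omega), if_neg (by omega), if_neg (by omega)]
      · rw [sigmaNat_letter_succ hd', ih (by omega)]
        simp

section Rotation

variable {m : ℕ}

theorem freeGroupCongr_finRotate_letter_of_lt {k : ℕ} (hk : k < m) :
    FreeGroup.freeGroupCongr (finRotate (m + 1)) (letter (m + 1) k) = letter (m + 1) (k + 1) := by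
  rw [letter_of_lt (by omega), letter_of_lt (by omega)]
  simp [finRotate_of_lt hk]

theorem freeGroupCongr_finRotate_letter_self :
    FreeGroup.freeGroupCongr (finRotate (m + 1)) (letter (m + 1) m) = letter (m + 1) 0 := by
  rw [letter_of_lt (by omega), letter_of_lt (by omega)]
  exact congrArg of finRotate_last'

theorem freeGroupCongr_finRotate_pow_letter_zero {k : ℕ} (hk : k ≤ m) :
    (FreeGroup.freeGroupCongr (finRotate (m + 1)) ^ k) (letter (m + 1) 0) = letter (m + 1) k := by
  induction k with
  | zero => rfl
  | succ k ih =>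
    rw [pow_succ', MulAut.mul_apply, ih (by omega),
      freeGroupCongr_finRotate_letter_of_lt (by omega)]

theorem freeGroupCongr_finRotate_pow_self :
    FreeGroup.freeGroupCongr (finRotate (m + 1)) ^ (m + 1) = 1 := by
  set ρ := FreeGroup.freeGroupCongr (finRotate (m + 1))
  have h0 : (ρ ^ (m + 1)) (letter (m + 1) 0) = letter (m + 1) 0 := by
    rw [pow_succ', MulAut.mul_apply, freeGroupCongr_finRotate_pow_letter_zero le_rfl,
      freeGroupCongr_finRotate_letter_self]
  refine FreeGroup.mulEquiv_ext fun ⟨i, hi⟩ => ?_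
  rw [← letter_of_lt hi, ← freeGroupCongr_finRotate_pow_letter_zero (by omega : i ≤ m),
    ← MulAut.mul_apply, pow_mul_comm, MulAut.mul_apply, h0]
  rfl

theorem prod_range_sigmaNat_eq_conj_mul :
    ((List.range m).map (sigmaNat (m + 1))).prod =
      MulAut.conj (letter (m + 1) 0) * FreeGroup.freeGroupCongr (finRotate (m + 1)) := by
  refine FreeGroup.mulEquiv_ext fun ⟨i, hi⟩ => ?_
  rw [← letter_of_lt hi, prod_range_sigmaNat_letter (Nat.lt_succ_self m), MulAut.mul_apply]
  rcases Nat.lt_or_eq_of_le (Nat.lt_succ_iff.mp hi) with hi | rfl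
  · rw [if_pos hi, freeGroupCongr_finRotate_letter_of_lt hi]
  · rw [if_neg (lt_irrefl _), if_pos rfl, freeGroupCongr_finRotate_letter_self,
      MulAut.conj_apply, mul_inv_cancel_right]

end Rotation

theorem conj_boundaryWord_mem_braidAut (n : ℕ) : MulAut.conj (boundaryWord n) ∈ BraidAut n := by
  obtain _ | m := n
  · simp [boundaryWord]
  have hprod_mem : ((List.range m).map (sigmaNat (m + 1))).prod ∈ BraidAut (m + 1) :=
    Subgroup.list_prod_mem _ fun σ hσ => by
      obtain ⟨k, hk, rfl⟩ := List.mem_map.mp hσ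
      exact Subgroup.subset_closure ⟨k, by simpa using hk, rfl⟩
  have hpow : ((List.range m).map (sigmaNat (m + 1))).prod ^ (m + 1) =
      MulAut.conj (boundaryWord (m + 1)) := by
    rw [prod_range_sigmaNat_eq_conj_mul, MulAut.conj_mul_pow, freeGroupCongr_finRotate_pow_self,
      mul_one, boundaryWord_eq_prod_range_letter]
    exact congrArg _ (congrArg _ (List.map_congr_left fun k hk =>
      freeGroupCongr_finRotate_pow_letter_zero (by simp at hk; omega)))
  exact hpow ▸ Subgroup.pow_mem _ hprod_mem _

theorem braidAut_inf_range_conj_le {n : ℕ} (hn : 0 < n) :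
    BraidAut n ⊓ (MulAut.conj : FreeGroup (Fin n) →* MulAut (FreeGroup (Fin n))).range ≤
      Subgroup.zpowers (MulAut.conj (boundaryWord n)) := by
  rintro _ ⟨hβ, w, rfl⟩
  have hw : Commute w (boundaryWord n) :=
    MulAut.conj_apply_eq_self_iff.mp (braidAut_le_stabilizer_boundaryWord n hβ)
  rw [← MonoidHom.map_zpowers]
  exact Subgroup.mem_map_of_mem _ <|
    FreeGroup.mem_zpowers_of_commute _ (exponentSum_boundaryWord ⟨0, hn⟩) hw

/-- Proposition 4.2: for every `n ≥ 2`, the intersection `B_n ∩ Inn(F_n)` is the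
infinite cyclic group generated by the inner automorphism of conjugation by
`x_1 x_2 ⋯ x_n`. -/
theorem braid_inter_inner (n : ℕ) (hn : 2 ≤ n) :
    BraidAut n ⊓ (MulAut.conj : FreeGroup (Fin n) →* MulAut (FreeGroup (Fin n))).range =
      Subgroup.zpowers (MulAut.conj ((List.ofFn fun i : Fin n => FreeGroup.of i).prod)) ∧
    ¬ IsOfFinOrder (MulAut.conj ((List.ofFn fun i : Fin n => FreeGroup.of i).prod)) := by
  have : Nontrivial (Fin n) := Fin.nontrivial_iff_two_le.mpr hn
  refine ⟨le_antisymm (braidAut_inf_range_conj_le (by omega)) ?_, ?_⟩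
  · rw [Subgroup.zpowers_le]
    exact ⟨conj_boundaryWord_mem_braidAut n, ⟨_, rfl⟩⟩
  · rw [FreeGroup.conj_injective.isOfFinOrder_iff]
    exact not_isOfFinOrder_of_isMulTorsionFree (boundaryWord_ne_one (by omega))
end
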